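/- Let H be a weighted graph with connected components H_1,…,H_m. Let t = ν(H) + 1 and t_i = ν(H_i) + 1 for i = 1,…,m. Then H is strongly t-saturating if and only if H_i is strongly t_i-saturating for every i = 1,…,m. -/

import Mathlib

open MvPolynomial
open scoped Classical

noncomputable section

/-! ### Weighted graphs and matchings -/

/-- Number of times the vertex `v` appears in the multiset of edges `M`. -/
def edgeCount {α : Type*} (M : Multiset (Sym2 α)) (v : α) : ℕ :=
  Multiset.countP (fun e => v ∈ e) M

/-- A matching of the weighted graph `(G, w)`: a family of edges of `G` (with repetitions
allowed) such that every vertex appears in these edges no more times than its weight.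
Vertices of weight `0` are regarded as not belonging to the weighted graph. -/
def IsWMatching {α : Type*} (G : SimpleGraph α) (w : α → ℕ) (M : Multiset (Sym2 α)) : Prop :=
  (∀ e ∈ M, e ∈ G.edgeSet) ∧ ∀ v, edgeCount M v ≤ w v

/-- The matching number of the weighted graph `(G, w)`. -/
def nu {α : Type*} (G : SimpleGraph α) (w : α → ℕ) : ℕ :=
  sSup {m | ∃ M : Multiset (Sym2 α), IsWMatching G w M ∧ Multiset.card M = m}

/-- `deg_w(i) = Σ_{j ∈ N_w(i)} w j`, the sum of the weights of the neighbours of `i`. -/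
def wdeg {α : Type*} [Fintype α] (G : SimpleGraph α) (w : α → ℕ) (i : α) : ℕ :=
  ∑ j : α, if G.Adj i j then w j else 0

/-- The weighted graph obtained from `(G, w)` by deleting the (open) neighbourhood of `i`. -/
def delNbr {α : Type*} (G : SimpleGraph α) (w : α → ℕ) (i : α) : α → ℕ :=
  fun j => if G.Adj i j then 0 else w j

/-- The weighted graph obtained from `(G, w)` by deleting the vertices of `N`. -/
def delSet {α : Type*} (w : α → ℕ) (N : Set α) : α → ℕ :=
  fun j => if j ∈ N then 0 else w j

/-- A weighted graph `H = (G, w)` is `t`-saturating if `ν(H) < t` and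
`ν(H − N_H(i)) ≥ t − deg_H(i)` for every vertex `i` of `H`. -/
def TSaturating {α : Type*} [Fintype α] (G : SimpleGraph α) (w : α → ℕ) (t : ℕ) : Prop :=
  nu G w < t ∧ ∀ i, 0 < w i → t ≤ nu G (delNbr G w i) + wdeg G w i

/-- A weighted graph `H = (G, w)` is strongly `t`-saturating if `ν(H) < t` and
`ν(H − j) ≥ t − w j` for every vertex `j` of `H`. -/
def StronglyTSaturating {α : Type*} (G : SimpleGraph α) (w : α → ℕ) (t : ℕ) : Prop :=
  nu G w < t ∧ ∀ j, 0 < w j → t ≤ nu G (delSet w {j}) + w j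

/-! ### Covers, cores, neighbourhoods -/

/-- A (vertex) cover of a graph. -/
def IsVCover {α : Type*} (G : SimpleGraph α) (F : Set α) : Prop :=
  ∀ ⦃i j⦄, G.Adj i j → i ∈ F ∨ j ∈ F

/-- A minimal (vertex) cover of a graph. -/
def IsMinimalVCover {α : Type*} (G : SimpleGraph α) (F : Set α) : Prop :=
  IsVCover G F ∧ ∀ F', IsVCover G F' → F' ⊆ F → F' = F

/-- `core(F)`: the set of vertices of `F` which are not adjacent to any vertex outside `F`. -/
def graphCore {α : Type*} (G : SimpleGraph α) (F : Set α) : Set α :=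
  {i | i ∈ F ∧ ∀ j, G.Adj i j → j ∈ F}

/-- The closed neighbourhood `N[U]` of a set of vertices `U`. -/
def closedNbhd {α : Type*} (G : SimpleGraph α) (U : Set α) : Set α :=
  U ∪ {v | ∃ u ∈ U, G.Adj u v}

/-- `F` is minimal among the covers of `G` containing `S`. -/
def MinimalCoverOver {α : Type*} (G : SimpleGraph α) (S F : Set α) : Prop :=
  IsVCover G F ∧ S ⊆ F ∧ ∀ F', IsVCover G F' → S ⊆ F' → F' ⊆ F → F' = F

/-- `W` is a dominating set: every vertex outside `W` is adjacent to a vertex of `W`. -/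
def IsDominating {α : Type*} (G : SimpleGraph α) (W : Set α) : Prop :=
  ∀ v, v ∉ W → ∃ u ∈ W, G.Adj u v

/-- Every connected component of `H` contains an odd cycle of length at most `L`. -/
def ComponentOddCycleLe {β : Type*} (H : SimpleGraph β) (L : ℕ) : Prop :=
  ∀ c : H.ConnectedComponent, ∃ (v : β) (cyc : H.Walk v v),
    H.connectedComponentMk v = c ∧ cyc.IsCycle ∧ Odd cyc.length ∧ cyc.length ≤ L

/-- Every connected component of `H` contains an odd cycle. -/
def ComponentOddCycle {β : Type*} (H : SimpleGraph β) : Prop :=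
  ∀ c : H.ConnectedComponent, ∃ (v : β) (cyc : H.Walk v v),
    H.connectedComponentMk v = c ∧ cyc.IsCycle ∧ Odd cyc.length

/-! ### Edge ideals -/

/-- The edge ideal of a simple graph. -/
def edgeIdeal (k : Type*) [CommRing k] {σ : Type*} (G : SimpleGraph σ) :
    Ideal (MvPolynomial σ k) :=
  Ideal.span {p | ∃ i j, G.Adj i j ∧ p = X i * X j}

/-- The maximal homogeneous ideal `(x_1, …, x_n)`. -/
def maxIdeal (k : Type*) [CommRing k] (σ : Type*) : Ideal (MvPolynomial σ k) :=
  Ideal.span (Set.range (X : σ → MvPolynomial σ k))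

/-- `P_F`, the ideal generated by the variables `x_i`, `i ∈ F`. -/
def varIdeal (k : Type*) [CommRing k] {σ : Type*} (F : Set σ) : Ideal (MvPolynomial σ k) :=
  Ideal.span ((fun i => (X i : MvPolynomial σ k)) '' F)

/-- The monomial `x^a`. -/
def monom (k : Type*) [CommRing k] {n : ℕ} (a : Fin n → ℕ) : MvPolynomial (Fin n) k :=
  ∏ i : Fin n, (X i : MvPolynomial (Fin n) k) ^ a i

/-- `f` belongs to the saturation `J̃ = ⋃_{m ≥ 1} (J : 𝔪^m)` of `J`. -/
def inSaturation (k : Type*) [CommRing k] {σ : Type*} (J : Ideal (MvPolynomial σ k))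
    (f : MvPolynomial σ k) : Prop :=
  ∃ m : ℕ, f ∈ Submodule.colon J (((maxIdeal k σ) ^ m : Ideal (MvPolynomial σ k)) : Set (MvPolynomial σ k))

/-- `P` is an associated prime of the ideal `J`, i.e. of the module `R ⧸ J`. -/
def assocPrime {R : Type*} [CommRing R] (J P : Ideal R) : Prop :=
  P ∈ associatedPrimes R (R ⧸ J)

/-- `P` is an embedded associated prime of `J`: an associated prime of `R ⧸ J` which is
not a minimal prime of `J`. -/
def embeddedAssocPrime {R : Type*} [CommRing R] (J P : Ideal R) : Prop :=
  assocPrime J P ∧ P ∉ J.minimalPrimes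

/-- The five configurations appearing in the description of `Ass(I³)`: a triangle; a union
of an edge and a triangle meeting at exactly one vertex; a union of two vertex-disjoint
triangles with no edges between them; a union of two triangles meeting at exactly one
vertex; a pentagon. `W` is the vertex set of the subgraph. -/
def Config3 {α : Type*} (G : SimpleGraph α) (W : Set α) : Prop :=
  (∃ u v w : α, u ≠ v ∧ u ≠ w ∧ v ≠ w ∧ G.Adj u v ∧ G.Adj v w ∧ G.Adj u w ∧
    W = {u, v, w}) ∨
  (∃ i j h v : α, [i, j, h, v].Pairwise (· ≠ ·) ∧ G.Adj i j ∧ G.Adj j h ∧ G.Adj i h ∧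
    G.Adj i v ∧ W = {i, j, h, v}) ∨
  (∃ u₁ v₁ w₁ u₂ v₂ w₂ : α, [u₁, v₁, w₁, u₂, v₂, w₂].Pairwise (· ≠ ·) ∧
    G.Adj u₁ v₁ ∧ G.Adj v₁ w₁ ∧ G.Adj u₁ w₁ ∧ G.Adj u₂ v₂ ∧ G.Adj v₂ w₂ ∧ G.Adj u₂ w₂ ∧
    (∀ x ∈ ({u₁, v₁, w₁} : Set α), ∀ y ∈ ({u₂, v₂, w₂} : Set α), ¬ G.Adj x y) ∧
    W = {u₁, v₁, w₁, u₂, v₂, w₂}) ∨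
  (∃ i j h u v : α, [i, j, h, u, v].Pairwise (· ≠ ·) ∧
    G.Adj i j ∧ G.Adj j h ∧ G.Adj i h ∧ G.Adj i u ∧ G.Adj u v ∧ G.Adj i v ∧
    W = {i, j, h, u, v}) ∨
  (∃ p : Fin 5 → α, Function.Injective p ∧ (∀ i : Fin 5, G.Adj (p i) (p (i + 1))) ∧
    W = Set.range p)

end

/-
A maximum matching of `H` splits along any vertex set `S` that no edge leaves into a matching of
`H` restricted to `S` and one of `H` restricted to the complement, and conversely two such
matchings add up to a matching of `H`; so `ν` is additive over such splittings, in particular over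
the components. Deleting a vertex `j` of a component `H_c` only changes the `H_c` summand, so
`ν(H) + 1 ≤ ν(H − j) + a_j` is equivalent to `ν(H_c) + 1 ≤ ν(H_c − j) + a_j`, which is the strong
saturation condition on both sides.
-/

section WeightedMatching

variable {α : Type*} {G : SimpleGraph α}

lemma edgeCount_add (M N : Multiset (Sym2 α)) (v : α) :
    edgeCount (M + N) v = edgeCount M v + edgeCount N v :=
  Multiset.countP_add _ _ _

lemma card_le_sum_edgeCount [Fintype α] (M : Multiset (Sym2 α)) :
    Multiset.card M ≤ ∑ v, edgeCount M v := by
  induction M using Multiset.induction with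
  | empty => simp
  | cons e M ih =>
    have h_one_le : 1 ≤ ∑ v, if v ∈ e then 1 else 0 := by
      induction e using Sym2.ind with
      | _ a b =>
        simpa using Finset.single_le_sum (f := fun v => if v ∈ s(a, b) then 1 else 0)
          (fun _ _ => Nat.zero_le _) (Finset.mem_univ a)
    simp only [edgeCount, Multiset.countP_cons, Finset.sum_add_distrib, Multiset.card_cons] at ih ⊢
    omega

lemma bddAbove_matchingCards [Fintype α] (G : SimpleGraph α) (w : α → ℕ) :
    BddAbove {m | ∃ M : Multiset (Sym2 α), IsWMatching G w M ∧ Multiset.card M = m} := by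
  refine ⟨∑ v, w v, ?_⟩
  rintro _ ⟨M, ⟨-, hM⟩, rfl⟩
  exact (card_le_sum_edgeCount M).trans (Finset.sum_le_sum fun v _ => hM v)

lemma IsWMatching.card_le_nu [Fintype α] {w : α → ℕ} {M : Multiset (Sym2 α)}
    (h : IsWMatching G w M) : Multiset.card M ≤ nu G w :=
  le_csSup (bddAbove_matchingCards G w) ⟨M, h, rfl⟩

lemma isWMatching_zero (G : SimpleGraph α) (w : α → ℕ) : IsWMatching G w 0 :=
  ⟨by simp, fun v => by simp [edgeCount]⟩

lemma exists_isWMatching_card_eq_nu [Fintype α] (G : SimpleGraph α) (w : α → ℕ) :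
    ∃ M, IsWMatching G w M ∧ Multiset.card M = nu G w := by
  refine Nat.sSup_mem ?_ (bddAbove_matchingCards G w)
  exact ⟨0, 0, isWMatching_zero G w, rfl⟩

lemma IsWMatching.add {w₁ w₂ : α → ℕ} {M₁ M₂ : Multiset (Sym2 α)}
    (h₁ : IsWMatching G w₁ M₁) (h₂ : IsWMatching G w₂ M₂) :
    IsWMatching G (w₁ + w₂) (M₁ + M₂) := by
  refine ⟨fun e he => ?_, fun v => ?_⟩
  · rcases Multiset.mem_add.1 he with he | he
    exacts [h₁.1 e he, h₂.1 e he]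
  · rw [edgeCount_add]
    exact add_le_add (h₁.2 v) (h₂.2 v)

lemma nu_add_nu_le_nu_add [Fintype α] (G : SimpleGraph α) (w₁ w₂ : α → ℕ) :
    nu G w₁ + nu G w₂ ≤ nu G (w₁ + w₂) := by
  obtain ⟨M₁, hM₁, hcard₁⟩ := exists_isWMatching_card_eq_nu G w₁
  obtain ⟨M₂, hM₂, hcard₂⟩ := exists_isWMatching_card_eq_nu G w₂
  simpa [hcard₁, hcard₂] using (hM₁.add hM₂).card_le_nu

lemma IsWMatching.indicator_of_le {w : α → ℕ} {M N : Multiset (Sym2 α)} {S : Set α}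
    (h : IsWMatching G w M) (hNM : N ≤ M) (hNS : ∀ e ∈ N, ∀ v ∈ e, v ∈ S) :
    IsWMatching G (S.indicator w) N := by
  refine ⟨fun e he => h.1 e (Multiset.mem_of_le hNM he), fun v => ?_⟩
  by_cases hv : v ∈ S
  · rw [Set.indicator_of_mem hv]
    exact (Multiset.countP_le_of_le _ hNM).trans (h.2 v)
  · rw [edgeCount, Multiset.countP_eq_zero.2 fun e he hve => hv (hNS e he v hve)]
    exact Nat.zero_le _

lemma nu_eq_nu_indicator_add_nu_indicator_compl [Fintype α] {S : Set α}
    (hS : ∀ ⦃a b⦄, G.Adj a b → (a ∈ S ↔ b ∈ S)) (w : α → ℕ) :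
    nu G w = nu G (S.indicator w) + nu G (Sᶜ.indicator w) := by
  refine le_antisymm ?_ ?_
  · obtain ⟨M, hM, hcard⟩ := exists_isWMatching_card_eq_nu G w
    let inS : Sym2 α → Prop := fun e => ∀ v ∈ e, v ∈ S
    have h_inS : IsWMatching G (S.indicator w) (M.filter inS) :=
      hM.indicator_of_le (Multiset.filter_le _ _) fun e he => Multiset.of_mem_filter he
    have h_inCompl : IsWMatching G (Sᶜ.indicator w) (M.filter fun e => ¬ inS e) := by
      refine hM.indicator_of_le (Multiset.filter_le _ _) fun e he => ?_
      obtain ⟨heM, he_out⟩ := Multiset.mem_filter.1 he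
      induction e using Sym2.ind with
      | _ a b => simpa [inS, hS (hM.1 _ heM : G.Adj a b)] using he_out
    calc nu G w = Multiset.card (M.filter inS) + Multiset.card (M.filter fun e => ¬ inS e) := by
          rw [← hcard, ← Multiset.card_add, Multiset.filter_add_not]
      _ ≤ nu G (S.indicator w) + nu G (Sᶜ.indicator w) :=
          Nat.add_le_add h_inS.card_le_nu h_inCompl.card_le_nu
  · simpa [Set.indicator_self_add_compl] using nu_add_nu_le_nu_add G (S.indicator w) (Sᶜ.indicator w)

lemma indicator_delSet (S N : Set α) (w : α → ℕ) :
    S.indicator (delSet w N) = delSet (S.indicator w) N := by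
  ext v
  by_cases hv : v ∈ S <;> simp [delSet, hv]

lemma indicator_compl_delSet {S N : Set α} (hN : N ⊆ S) (w : α → ℕ) :
    Sᶜ.indicator (delSet w N) = Sᶜ.indicator w := by
  ext v
  by_cases hv : v ∈ S
  · simp [hv]
  · have hvN : v ∉ N := fun h => hv (hN h)
    simp [delSet, hv, hvN]

lemma succ_nu_le_nu_delSet_add_iff_indicator [Fintype α] {S : Set α}
    (hS : ∀ ⦃a b⦄, G.Adj a b → (a ∈ S ↔ b ∈ S)) (w : α → ℕ) {j : α} (hj : j ∈ S) :
    nu G w + 1 ≤ nu G (delSet w {j}) + w j ↔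
      nu G (S.indicator w) + 1 ≤ nu G (delSet (S.indicator w) {j}) + S.indicator w j := by
  rw [nu_eq_nu_indicator_add_nu_indicator_compl hS w,
    nu_eq_nu_indicator_add_nu_indicator_compl hS (delSet w {j}), indicator_delSet,
    indicator_compl_delSet (Set.singleton_subset_iff.2 hj), Set.indicator_of_mem hj]
  omega

lemma stronglyTSaturating_nu_succ_iff (G : SimpleGraph α) (w : α → ℕ) :
    StronglyTSaturating G w (nu G w + 1) ↔
      ∀ j, 0 < w j → nu G w + 1 ≤ nu G (delSet w {j}) + w j :=
  and_iff_right (Nat.lt_succ_self _)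

end WeightedMatching

theorem stmt10_general {α : Type*} [Fintype α] (G : SimpleGraph α) (w : α → ℕ) :
    StronglyTSaturating G w (nu G w + 1) ↔
      ∀ c : G.ConnectedComponent,
        StronglyTSaturating G (fun v => if G.connectedComponentMk v = c then w v else 0)
          (nu G (fun v => if G.connectedComponentMk v = c then w v else 0) + 1) := by
  have h_restrict (c : G.ConnectedComponent) :
      (fun v => if G.connectedComponentMk v = c then w v else 0) = c.supp.indicator w := by
    ext v
    simp [Set.indicator_apply]
  have h_closed (c : G.ConnectedComponent) : ∀ ⦃a b⦄, G.Adj a b → (a ∈ c.supp ↔ b ∈ c.supp) :=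
    fun _ _ hab => c.mem_supp_congr_adj hab
  simp only [h_restrict, stronglyTSaturating_nu_succ_iff]
  constructor
  · intro h c j hj
    have hjc : j ∈ c.supp := Set.mem_of_indicator_ne_zero hj.ne'
    rw [Set.indicator_of_mem hjc] at hj
    exact (succ_nu_le_nu_delSet_add_iff_indicator (h_closed c) w hjc).1 (h j hj)
  · intro h j hj
    have hjc : j ∈ (G.connectedComponentMk j).supp := rfl
    refine (succ_nu_le_nu_delSet_add_iff_indicator (h_closed _) w hjc).2 (h _ j ?_)
    rwa [Set.indicator_of_mem hjc]

theorem stmt10 {α : Type*} [Fintype α] (G : SimpleGraph α) (w : α → ℕ)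
    (hw : ∀ i, 0 < w i) :
    StronglyTSaturating G w (nu G w + 1) ↔
      ∀ c : G.ConnectedComponent,
        StronglyTSaturating G (fun v => if G.connectedComponentMk v = c then w v else 0)
          (nu G (fun v => if G.connectedComponentMk v = c then w v else 0) + 1) :=
  stmt10_general G w
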